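/- Define ρ¹(x) = (1/2)·[[1 + cos x, i sin x], [−i sin x, 1 − cos x]] for x ∈ ℝ. Then the derivative satisfies the parameter-shift rule: dρ¹/dx (x) = (ρ¹(x + π/2) − ρ¹(x − π/2)) / 2. -/
import Mathlib


open Real Complex Matrix

/-- The single-qubit encoded state `ρ¹(x) = R_X(x)|0⟩⟨0|R_X(x)†`. -/
noncomputable def rho1 (x : ℝ) : Matrix (Fin 2) (Fin 2) ℂ :=
  (1 / 2 : ℂ) • !![(1 + Real.cos x : ℂ), Complex.I * Real.sin x;
                   -Complex.I * Real.sin x, 1 - Real.cos x]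

/-- the parameter-shift rule, entrywise:
`dρ¹/dx (x) = (ρ¹(x + π/2) − ρ¹(x − π/2)) / 2`. -/
theorem rho1_parameter_shift (x : ℝ) (i j : Fin 2) :
    deriv (fun t => rho1 t i j) x
      = ((rho1 (x + π / 2) - rho1 (x - π / 2)) i j) / 2 := by
  have hc : HasDerivAt (fun t : ℝ => Complex.cos t) (-(Real.sin x : ℂ)) x := by
    simpa [Complex.ofReal_cos] using (Real.hasDerivAt_cos x).ofReal_comp
  have hs : HasDerivAt (fun t : ℝ => Complex.sin t) ((Real.cos x : ℂ)) x := by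
    simpa [Complex.ofReal_sin] using (Real.hasDerivAt_sin x).ofReal_comp
  have h1 : HasDerivAt (fun t : ℝ => (1 : ℂ) - Complex.cos t)
      ((0 : ℂ) - -(Real.sin x : ℂ)) x := (hasDerivAt_const x (1 : ℂ)).sub hc
  have e1 : ((x : ℂ) + (π : ℂ) / 2) = ((x + π / 2 : ℝ) : ℂ) := by push_cast; ring
  have e2 : ((x : ℂ) - (π : ℂ) / 2) = ((x - π / 2 : ℝ) : ℂ) := by push_cast; ring
  fin_cases i <;> fin_cases j <;> simp [rho1] <;>
    (first | rw [hc.deriv] | rw [hs.deriv] | rw [h1.deriv]) <;>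
    simp only [e1, e2, ← Complex.ofReal_cos, ← Complex.ofReal_sin, Real.cos_add, Real.cos_sub,
      Real.sin_add, Real.sin_sub, Real.cos_pi_div_two, Real.sin_pi_div_two] <;>
    push_cast <;> ring
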